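/- Suppose l > 0 satisfies ‖∇²f(ξ)‖ ≤ l for every ξ ∈ C_{2s} ∩ B. Let δ > 0, let x ∈ C_s ∩ B, let τ ∈ (0, 1/(l+δ)], and let x⁺ ∈ Π_{C_s ∩ B}(x − τ ∇f(x)). Then f(x) − f(x⁺) ≥ (δ/2) ‖x − x⁺‖₂². -/

import Mathlib

/-!
Along the segment from `x` to `x⁺` every point is a convex combination of two `s`-sparse points
of the box, hence lies in `C_{2s} ∩ B`, where the Hessian bound makes `∇f` `l`-Lipschitz. This
gives the descent inequality `f(x⁺) ≤ f(x) + ⟪∇f(x), x⁺ - x⟫ + (l/2)‖x⁺ - x‖²`. Comparing `x⁺`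
with the feasible point `x` in the projection gives `‖x⁺ - x‖² + 2τ⟪∇f(x), x⁺ - x⟫ ≤ 0`, and
`1/τ ≥ l + δ` turns the two inequalities into the claim.
-/

open scoped RealInnerProductSpace
open Finset Filter

/-- `ℓ₀`-"norm": number of nonzero coordinates of `x`. -/
noncomputable def l0norm {n : ℕ} (x : EuclideanSpace ℝ (Fin n)) : ℕ :=
  Nat.card {i : Fin n // x i ≠ 0}

/-- The sparsity set `C_t = {x : ‖x‖₀ ≤ t}`. -/
def sparseSet (n t : ℕ) : Set (EuclideanSpace ℝ (Fin n)) := {x | l0norm x ≤ t}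

/-- The box `B = [0,1]ⁿ`. -/
def boxSet (n : ℕ) : Set (EuclideanSpace ℝ (Fin n)) := {x | ∀ i, 0 ≤ x i ∧ x i ≤ 1}

/-- Objective `f(x) = (1/m) ∑ i (xᵀ A_i x − y_i)²`. -/
noncomputable def fObj {n m : ℕ} (A : Fin m → Matrix (Fin n) (Fin n) ℝ) (y : Fin m → ℝ)
    (x : EuclideanSpace ℝ (Fin n)) : ℝ :=
  (1 / (m : ℝ)) * ∑ i, ((∑ u, ∑ v, x u * A i u v * x v) - y i) ^ 2

/-- Euclidean projection set of `z` onto `S`. -/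
def projSet {n : ℕ} (S : Set (EuclideanSpace ℝ (Fin n))) (z : EuclideanSpace ℝ (Fin n)) :
    Set (EuclideanSpace ℝ (Fin n)) :=
  {x | x ∈ S ∧ ∀ w ∈ S, ‖x - z‖ ≤ ‖w - z‖}

open Set

section Descent

variable {E : Type*} [NormedAddCommGroup E] [NormedSpace ℝ E]

theorem le_add_fderiv_add_of_norm_fderiv_sub_le {f : E → ℝ} {x y : E} {L : ℝ}
    (hf : ∀ z ∈ segment ℝ x y, DifferentiableAt ℝ f z)
    (hLip : ∀ z ∈ segment ℝ x y, ‖fderiv ℝ f z - fderiv ℝ f x‖ ≤ L * ‖z - x‖) :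
    f y ≤ f x + fderiv ℝ f x (y - x) + L / 2 * ‖y - x‖ ^ 2 := by
  set v := y - x
  set c := fderiv ℝ f x v
  have hseg : ∀ t ∈ Icc (0 : ℝ) 1, x + t • v ∈ segment ℝ x y := fun t ht => by
    rw [segment_eq_image']
    exact ⟨t, ht, rfl⟩
  -- `ψ 1 ≤ ψ 0` is the claim, and `ψ' ≤ 0` on `[0, 1]` is the Lipschitz bound along the segment.
  set ψ : ℝ → ℝ := fun t => f (x + t • v) - t * c - L / 2 * ‖v‖ ^ 2 * t ^ 2
  have hψ : ∀ t ∈ Icc (0 : ℝ) 1,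
      HasDerivAt ψ ((fderiv ℝ f (x + t • v) - fderiv ℝ f x) v - L * ‖v‖ ^ 2 * t) t := by
    intro t ht
    have hline : HasDerivAt (fun t : ℝ => x + t • v) v t := by
      simpa using ((hasDerivAt_id t).smul_const v).const_add x
    refine ((((hf _ (hseg t ht)).hasFDerivAt.comp_hasDerivAt t hline).sub
      ((hasDerivAt_id t).mul_const c)).sub
        ((hasDerivAt_pow 2 t).const_mul (L / 2 * ‖v‖ ^ 2))).congr_deriv ?_
    simp only [sub_apply, c]
    ring
  have hψ_nonpos : ∀ t ∈ Icc (0 : ℝ) 1,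
      (fderiv ℝ f (x + t • v) - fderiv ℝ f x) v - L * ‖v‖ ^ 2 * t ≤ 0 := by
    intro t ht
    have hLip_t : ‖fderiv ℝ f (x + t • v) - fderiv ℝ f x‖ ≤ L * (t * ‖v‖) := by
      simpa [norm_smul, Real.norm_of_nonneg ht.1] using hLip _ (hseg t ht)
    rw [sub_nonpos]
    calc (fderiv ℝ f (x + t • v) - fderiv ℝ f x) v
        ≤ ‖fderiv ℝ f (x + t • v) - fderiv ℝ f x‖ * ‖v‖ :=
          (Real.le_norm_self _).trans (ContinuousLinearMap.le_opNorm _ v)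
      _ ≤ L * (t * ‖v‖) * ‖v‖ := by gcongr
      _ = L * ‖v‖ ^ 2 * t := by ring
  have hanti : AntitoneOn ψ (Icc 0 1) :=
    antitoneOn_of_deriv_nonpos (convex_Icc 0 1)
      (fun t ht => (hψ t ht).continuousAt.continuousWithinAt)
      (fun t ht => (hψ t (interior_subset ht)).differentiableAt.differentiableWithinAt)
      (fun t ht => (hψ t (interior_subset ht)).deriv ▸ hψ_nonpos t (interior_subset ht))
  have h10 : ψ 1 ≤ ψ 0 :=
    hanti (left_mem_Icc.2 zero_le_one) (right_mem_Icc.2 zero_le_one) zero_le_one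
  simp only [ψ, v, one_smul, zero_smul, add_zero, add_sub_cancel] at h10
  linarith

theorem Convex.le_add_fderiv_add_of_norm_fderiv_fderiv_le {s : Set E} (hs : Convex ℝ s)
    {f : E → ℝ} (hf : ContDiff ℝ 2 f) {L : ℝ} (hbound : ∀ z ∈ s, ‖fderiv ℝ (fderiv ℝ f) z‖ ≤ L)
    {x y : E} (hx : x ∈ s) (hy : y ∈ s) :
    f y ≤ f x + fderiv ℝ f x (y - x) + L / 2 * ‖y - x‖ ^ 2 := by
  have hf' : Differentiable ℝ (fderiv ℝ f) :=
    (hf.fderiv_right (m := 1) le_rfl).differentiable one_ne_zero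
  refine le_add_fderiv_add_of_norm_fderiv_sub_le
    (fun z _ => hf.differentiable two_ne_zero z) fun z hz => ?_
  exact hs.norm_image_sub_le_of_norm_fderiv_le (fun z _ => hf' z) hbound hx
    (hs.segment_subset hx hy hz)

end Descent

section Constraints

variable {n : ℕ}

theorem l0norm_eq_card (x : EuclideanSpace ℝ (Fin n)) : l0norm x = #{i | x i ≠ 0} := by
  rw [l0norm, Nat.card_eq_fintype_card, Fintype.card_subtype]

theorem l0norm_smul_add_smul_le (a b : ℝ) (x y : EuclideanSpace ℝ (Fin n)) :
    l0norm (a • x + b • y) ≤ l0norm x + l0norm y := by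
  simp only [l0norm_eq_card]
  refine (card_le_card fun i hi => ?_).trans (card_union_le _ _)
  simp only [Finset.mem_filter, Finset.mem_union, Finset.mem_univ, true_and] at hi ⊢
  by_contra! h
  simp [h.1, h.2] at hi

theorem segment_subset_sparseSet {s t : ℕ} {x y : EuclideanSpace ℝ (Fin n)}
    (hx : x ∈ sparseSet n s) (hy : y ∈ sparseSet n t) :
    segment ℝ x y ⊆ sparseSet n (s + t) := by
  rintro _ ⟨a, b, -, -, -, rfl⟩
  exact (l0norm_smul_add_smul_le a b x y).trans (add_le_add hx hy)

theorem convex_boxSet : Convex ℝ (boxSet n) := by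
  intro x hx y hy a b ha hb hab i
  simp only [PiLp.add_apply, PiLp.smul_apply, smul_eq_mul]
  have hxi := hx i
  have hyi := hy i
  constructor <;> nlinarith

theorem norm_sub_sq_add_two_mul_inner_nonpos_of_mem_projSet
    {S : Set (EuclideanSpace ℝ (Fin n))} {x p g : EuclideanSpace ℝ (Fin n)} {τ : ℝ}
    (hp : p ∈ projSet S (x - τ • g)) (hx : x ∈ S) :
    ‖p - x‖ ^ 2 + 2 * τ * ⟪g, p - x⟫ ≤ 0 := by
  have h := hp.2 x hx
  rw [show p - (x - τ • g) = (p - x) + τ • g by abel, sub_sub_cancel] at h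
  have hsq := pow_le_pow_left₀ (norm_nonneg _) h 2
  rw [norm_add_sq_real, inner_smul_right, real_inner_comm] at hsq
  linarith

end Constraints

theorem contDiff_fObj {n m : ℕ} (A : Fin m → Matrix (Fin n) (Fin n) ℝ) (y : Fin m → ℝ) :
    ContDiff ℝ 2 (fObj A y) := by
  unfold fObj
  fun_prop

theorem projected_gradient_sufficient_decrease_general {n m s : ℕ}
    (A : Fin m → Matrix (Fin n) (Fin n) ℝ) (y : Fin m → ℝ)
    {l : ℝ}
    (hHess : ∀ ξ ∈ sparseSet n (2 * s) ∩ boxSet n,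
      ‖fderiv ℝ (fderiv ℝ (fObj A y)) ξ‖ ≤ l)
    {δ : ℝ} {x : EuclideanSpace ℝ (Fin n)} (hx : x ∈ sparseSet n s ∩ boxSet n)
    {τ : ℝ} (hτ0 : 0 < τ) (hτ1 : τ ≤ 1 / (l + δ))
    {xp : EuclideanSpace ℝ (Fin n)}
    (hxp : xp ∈ projSet (sparseSet n s ∩ boxSet n) (x - τ • gradient (fObj A y) x)) :
    fObj A y x - fObj A y xp ≥ δ / 2 * ‖x - xp‖ ^ 2 := by
  have hseg : segment ℝ x xp ⊆ sparseSet n (2 * s) ∩ boxSet n := by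
    rw [two_mul]
    exact subset_inter (segment_subset_sparseSet hx.1 hxp.1.1)
      (convex_boxSet.segment_subset hx.2 hxp.1.2)
  have hdescent := (convex_segment x xp).le_add_fderiv_add_of_norm_fderiv_fderiv_le
    (contDiff_fObj A y) (fun z hz => hHess z (hseg hz))
    (left_mem_segment ℝ x xp) (right_mem_segment ℝ x xp)
  have hstep := norm_sub_sq_add_two_mul_inner_nonpos_of_mem_projSet hxp hx
  rw [inner_gradient_left] at hstep
  have hτl : τ * (l + δ) ≤ 1 := by
    rwa [le_div_iff₀ (one_div_pos.1 (hτ0.trans_le hτ1))] at hτ1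
  rw [norm_sub_rev]
  nlinarith [mul_le_mul_of_nonneg_left hdescent hτ0.le,
    mul_nonneg (sub_nonneg.2 hτl) (sq_nonneg ‖xp - x‖)]

/-- one projected-gradient step with `τ ≤ 1/(l+δ)` yields sufficient decrease. -/
theorem projected_gradient_sufficient_decrease {n m s : ℕ} (hn : 0 < n) (hm : 0 < m)
    (hs : 0 < s) (hsn : s ≤ n) (A : Fin m → Matrix (Fin n) (Fin n) ℝ) (y : Fin m → ℝ)
    {l : ℝ} (hl : 0 < l)
    (hHess : ∀ ξ ∈ sparseSet n (2 * s) ∩ boxSet n,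
      ‖fderiv ℝ (fderiv ℝ (fObj A y)) ξ‖ ≤ l)
    {δ : ℝ} (hδ : 0 < δ) {x : EuclideanSpace ℝ (Fin n)} (hx : x ∈ sparseSet n s ∩ boxSet n)
    {τ : ℝ} (hτ0 : 0 < τ) (hτ1 : τ ≤ 1 / (l + δ))
    {xp : EuclideanSpace ℝ (Fin n)}
    (hxp : xp ∈ projSet (sparseSet n s ∩ boxSet n) (x - τ • gradient (fObj A y) x)) :
    fObj A y x - fObj A y xp ≥ δ / 2 * ‖x - xp‖ ^ 2 :=
  projected_gradient_sufficient_decrease_general A y hHess hx hτ0 hτ1 hxp
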